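/- Let n ≥ 3 and ε > 0, and let X be a set of 3-element subsets of Fin n with |X| ≤ n^{2+ε}, such that every triangle of Fin n admits a ℤ/2-filling contained in X, and such that ‖dβ‖²_X ≥ (n^{ε}/3)·‖β‖² for every coclosed 1-cochain β. Then for every map φ from Fin n to a real inner product space satisfying Area(φτ) ≥ Fill_X(τ) for every triangle τ, there exists a face f ∈ X with Area(φf)² ≥ (1/(9·n³))·Σ_τ Fill_X(τ)², the sum running over all triangles τ of Fin n. -/

import Mathlib

open Finset

/-- `y` is a ℤ/2-filling of the triangle `τ`: `y` consists of 3-element subsets, and for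
every edge `e` the number of members of `y` containing `e` has the same parity as the
indicator that `e ⊆ τ`. -/
def IsFilling {n : ℕ} (y : Finset (Finset (Fin n))) (τ : Finset (Fin n)) : Prop :=
  (∀ f ∈ y, f.card = 3) ∧
  ∀ e : Finset (Fin n), e.card = 2 →
    (y.filter (fun f => e ⊆ f)).card % 2 = (if e ⊆ τ then 1 else 0)

/-- `Fill_X(τ)`: the minimal cardinality of a ℤ/2-filling of `τ` contained in `X`. -/
noncomputable def fillIn {n : ℕ} (X : Finset (Finset (Fin n))) (τ : Finset (Fin n)) : ℕ :=
  sInf {m | ∃ y ⊆ X, IsFilling y τ ∧ y.card = m}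

/-- The coboundary of a 1-cochain evaluated on a triangle `{u,v,w}` with `u < v < w`. -/
def dOne {n : ℕ} (β : Fin n → Fin n → ℝ) (f : Finset (Fin n)) : ℝ :=
  match f.sort (· ≤ ·) with
  | [u, v, w] => β u v - β u w + β v w
  | _ => 0

/-- `‖β‖² = ∑_{u<v} β(u,v)²`. -/
def normSq {n : ℕ} (β : Fin n → Fin n → ℝ) : ℝ :=
  ∑ u : Fin n, ∑ v ∈ Finset.univ.filter (fun v => u < v), β u v ^ 2

/-- The area of the affine image of a triangle `τ = {a,b,c}` (with `a < b < c`) under `φ`. -/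
noncomputable def triArea {n : ℕ} {H : Type*} [NormedAddCommGroup H] [InnerProductSpace ℝ H]
    (φ : Fin n → H) (τ : Finset (Fin n)) : ℝ :=
  match τ.sort (· ≤ ·) with
  | [a, b, c] =>
      (1/2) * Real.sqrt (‖φ b - φ a‖ ^ 2 * ‖φ c - φ a‖ ^ 2 -
        (inner ℝ (φ b - φ a) (φ c - φ a) : ℝ) ^ 2)
  | _ => 0


/-!
Let `(e_p)` be an orthonormal basis of the span of `φ` and `x_u = φ u - c` with `c` the centroid.
The cochains `β_pq(u, v) = ⟨x_u ∧ x_v, e_p ∧ e_q⟩` are coclosed, and by Lagrange's identity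
`∑_pq dβ_pq(τ)² = 8 Area(φτ)²` for every triangle `τ`. Summing the spectral inequality over `p, q`
bounds `∑_pq ‖β_pq‖²` by `24 n^{-ε} ∑_{f ∈ X} Area(φf)²`, while over all triangles
`∑_τ dβ(τ)² ≤ 3 (n - 2) ‖β‖²`. Hence `∑_τ Fill_X(τ)² ≤ ∑_τ Area(φτ)² ≤ 9 n³ max_{f ∈ X} Area(φf)²`.
-/
section PairSums

variable {α : Type*}

theorem card_filter_card_eq_and_subset [Fintype α] [DecidableEq α] {s : Finset α} {k : ℕ}
    (hs : #s ≤ k) :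
    #{τ : Finset α | #τ = k ∧ s ⊆ τ} = (Fintype.card α - #s).choose (k - #s) := by
  rw [← card_compl, ← card_powersetCard]
  refine card_nbij' (· \ s) (· ∪ s) ?_ ?_ ?_ ?_
  · intro τ hτ
    simp only [coe_filter, mem_univ, true_and, Set.mem_ofPred_eq] at hτ
    rw [mem_coe, mem_powersetCard, subset_compl_iff_disjoint_right, card_sdiff_of_subset hτ.2, hτ.1]
    exact ⟨sdiff_disjoint, rfl⟩
  · intro t ht
    rw [mem_coe, mem_powersetCard, subset_compl_iff_disjoint_right] at ht
    simp only [coe_filter, mem_univ, true_and, Set.mem_ofPred_eq]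
    exact ⟨by rw [card_union_of_disjoint ht.1, ht.2]; omega, subset_union_right⟩
  · intro τ hτ
    simp only [coe_filter, mem_univ, true_and, Set.mem_ofPred_eq] at hτ
    exact sdiff_union_of_subset hτ.2
  · intro t ht
    rw [mem_coe, mem_powersetCard, subset_compl_iff_disjoint_right] at ht
    exact union_sdiff_cancel_right ht.1

theorem card_filter_card_eq_three_mem_mem [Fintype α] [DecidableEq α] {u v : α} (huv : u ≠ v) :
    #{τ : Finset α | #τ = 3 ∧ u ∈ τ ∧ v ∈ τ} = Fintype.card α - 2 := by
  have hpair : #{u, v} = 2 := card_pair huv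
  have := card_filter_card_eq_and_subset (s := {u, v}) (k := 3) (by omega)
  simp only [hpair, insert_subset_iff, singleton_subset_iff] at this
  simpa using this

variable [LinearOrder α]

def pairSum (s : Finset α) (g : α → α → ℝ) : ℝ :=
  ∑ u ∈ s, ∑ v ∈ s with u < v, g u v

theorem normSq_eq_pairSum {n : ℕ} (β : Fin n → Fin n → ℝ) :
    normSq β = pairSum univ (fun u v => β u v ^ 2) := rfl

theorem pairSum_triple {a b c : α} (hab : a < b) (hbc : b < c) (g : α → α → ℝ) :
    pairSum {a, b, c} g = g a b + g a c + g b c := by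
  have hac := hab.trans hbc
  simp [pairSum, filter_insert, filter_singleton, hab, hbc, hac, hab.ne, hbc.ne, hac.ne,
    hab.not_gt, hbc.not_gt, hac.not_gt, add_assoc]

theorem sum_pairSum_card_eq_three [Fintype α] (g : α → α → ℝ) :
    ∑ τ : Finset α with #τ = 3, pairSum τ g = (Fintype.card α - 2 : ℕ) * pairSum univ g := by
  unfold pairSum
  rw [sum_comm' (t' := univ) (s' := fun u => {τ : Finset α | #τ = 3 ∧ u ∈ τ}) (by simp), mul_sum]
  refine sum_congr rfl fun u _ => ?_
  rw [sum_comm' (t' := {v | u < v}) (s' := fun v => {τ : Finset α | #τ = 3 ∧ u ∈ τ ∧ v ∈ τ})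
    (by intro τ v; simp; tauto), mul_sum]
  refine sum_congr rfl fun v hv => ?_
  rw [sum_const, card_filter_card_eq_three_mem_mem (mem_filter.1 hv).2.ne, nsmul_eq_mul]

end PairSums

section Cochains

variable {n : ℕ}

theorem exists_sort_eq_of_card_eq_three {τ : Finset (Fin n)} (h : #τ = 3) :
    ∃ a b c : Fin n, a < b ∧ b < c ∧ τ.sort (· ≤ ·) = [a, b, c] ∧ τ = {a, b, c} := by
  have hlen : (τ.sort (· ≤ ·)).length = 3 := by rw [length_sort, h]
  obtain ⟨a, b, c, habc⟩ := List.length_eq_three.mp hlen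
  have hsorted := (sortedLT_sort τ).pairwise
  rw [habc] at hsorted
  simp only [List.pairwise_cons, List.mem_cons, List.not_mem_nil] at hsorted
  refine ⟨a, b, c, by tauto, by tauto, habc, ?_⟩
  simpa [habc] using (sort_toFinset (r := (· ≤ ·)) τ).symm

theorem sq_dOne_le (β : Fin n → Fin n → ℝ) {τ : Finset (Fin n)} (hτ : #τ = 3) :
    dOne β τ ^ 2 ≤ 3 * pairSum τ (fun u v => β u v ^ 2) := by
  obtain ⟨a, b, c, hab, hbc, hsort, rfl⟩ := exists_sort_eq_of_card_eq_three hτ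
  rw [dOne, hsort, pairSum_triple hab hbc]
  nlinarith [sq_nonneg (β a b + β a c), sq_nonneg (β a c + β b c), sq_nonneg (β a b - β b c)]

theorem sum_sq_dOne_le (β : Fin n → Fin n → ℝ) :
    ∑ τ : Finset (Fin n) with #τ = 3, dOne β τ ^ 2 ≤ 3 * (n - 2 : ℕ) * normSq β := by
  calc ∑ τ : Finset (Fin n) with #τ = 3, dOne β τ ^ 2
      ≤ ∑ τ : Finset (Fin n) with #τ = 3, 3 * pairSum τ (fun u v => β u v ^ 2) :=
        sum_le_sum fun τ hτ => sq_dOne_le β (mem_filter.1 hτ).2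
    _ = 3 * (n - 2 : ℕ) * normSq β := by
        rw [← mul_sum, sum_pairSum_card_eq_three, Fintype.card_fin, normSq_eq_pairSum, mul_assoc]

end Cochains

section Wedge

open RealInnerProductSpace

variable {E F : Type*} [NormedAddCommGroup E] [InnerProductSpace ℝ E]
  [NormedAddCommGroup F] [InnerProductSpace ℝ F]

/-- The `(e₁, e₂)`-coordinate of `x ∧ y`. -/
def wedgeCoord (e₁ e₂ x y : E) : ℝ := ⟪x, e₁⟫ * ⟪y, e₂⟫ - ⟪x, e₂⟫ * ⟪y, e₁⟫

theorem wedgeCoord_swap (e₁ e₂ x y : E) : wedgeCoord e₁ e₂ y x = -wedgeCoord e₁ e₂ x y := by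
  unfold wedgeCoord; ring

theorem wedgeCoord_self (e₁ e₂ x : E) : wedgeCoord e₁ e₂ x x = 0 := by
  unfold wedgeCoord; ring

theorem sum_wedgeCoord_left {ι : Type*} (s : Finset ι) (e₁ e₂ : E) (x : ι → E) (y : E) :
    ∑ i ∈ s, wedgeCoord e₁ e₂ (x i) y = wedgeCoord e₁ e₂ (∑ i ∈ s, x i) y := by
  simp only [wedgeCoord, sum_inner, sum_sub_distrib, sum_mul]

theorem wedgeCoord_sub_sub (e₁ e₂ a b c : E) :
    wedgeCoord e₁ e₂ (b - a) (c - a) =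
      wedgeCoord e₁ e₂ a b - wedgeCoord e₁ e₂ a c + wedgeCoord e₁ e₂ b c := by
  simp only [wedgeCoord, inner_sub_left]; ring

theorem sum_sq_wedgeCoord {ι : Type*} [Fintype ι] (b : OrthonormalBasis ι ℝ E) (x y : E) :
    ∑ p : ι × ι, wedgeCoord (b p.1) (b p.2) x y ^ 2 = 2 * (‖x‖ ^ 2 * ‖y‖ ^ 2 - ⟪x, y⟫ ^ 2) := by
  have parseval (z w : E) : ∑ i, ⟪z, b i⟫ * ⟪w, b i⟫ = ⟪z, w⟫ := by
    simpa only [real_inner_comm w] using b.sum_inner_mul_inner z w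
  have lagrange (p q : ι) : wedgeCoord (b p) (b q) x y ^ 2 =
      ⟪x, b p⟫ ^ 2 * ⟪y, b q⟫ ^ 2 + ⟪y, b p⟫ ^ 2 * ⟪x, b q⟫ ^ 2
        - 2 * (⟪x, b p⟫ * ⟪y, b p⟫) * (⟪x, b q⟫ * ⟪y, b q⟫) := by
    unfold wedgeCoord; ring
  simp only [Fintype.sum_prod_type, lagrange, sum_add_distrib, sum_sub_distrib, ← mul_sum,
    ← sum_mul, sq, parseval, real_inner_self_eq_norm_sq]
  ring

variable {n : ℕ}

theorem triArea_comp_linearIsometry (L : E →ₗᵢ[ℝ] F) (φ : Fin n → E) (τ : Finset (Fin n)) :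
    triArea (L ∘ φ) τ = triArea φ τ := by
  unfold triArea
  split <;> simp only [Function.comp_apply, ← map_sub, LinearIsometry.norm_map,
    LinearIsometry.inner_map_map]

theorem triArea_sub_const (φ : Fin n → E) (z : E) (τ : Finset (Fin n)) :
    triArea (fun i => φ i - z) τ = triArea φ τ := by
  unfold triArea
  split <;> simp only [sub_sub_sub_cancel_right]

theorem sum_sq_dOne_wedgeCoord {ι : Type*} [Fintype ι] (b : OrthonormalBasis ι ℝ E)
    (x : Fin n → E) (f : Finset (Fin n)) :
    ∑ p : ι × ι, dOne (fun u v => wedgeCoord (b p.1) (b p.2) (x u) (x v)) f ^ 2 =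
      8 * triArea x f ^ 2 := by
  unfold dOne triArea
  split
  · rename_i u v w _
    have gram_nonneg : 0 ≤ ‖x v - x u‖ ^ 2 * ‖x w - x u‖ ^ 2 - ⟪x v - x u, x w - x u⟫ ^ 2 := by
      rw [sub_nonneg, ← mul_pow, ← sq_abs]
      exact pow_le_pow_left₀ (abs_nonneg _) (abs_real_inner_le_norm _ _) 2
    rw [mul_pow, Real.sq_sqrt gram_nonneg]
    simp only [← wedgeCoord_sub_sub, sum_sq_wedgeCoord]
    ring
  · simp

theorem sum_sub_centroid (φ : Fin n → E) :
    ∑ i, (φ i - (n : ℝ)⁻¹ • ∑ j, φ j) = 0 := by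
  rcases Nat.eq_zero_or_pos n with rfl | hn
  · simp
  rw [sum_sub_distrib, sum_const, card_univ, Fintype.card_fin, ← Nat.cast_smul_eq_nsmul ℝ,
    smul_smul, mul_inv_cancel₀ (by positivity), one_smul, sub_self]

theorem exists_coclosed_cochains_sum_sq_dOne_eq_of_finiteDimensional [FiniteDimensional ℝ E]
    (φ : Fin n → E) :
    ∃ (m : ℕ) (β : Fin m × Fin m → Fin n → Fin n → ℝ), (∀ k u v, β k u v = -β k v u) ∧
      (∀ k v, ∑ u ∈ univ.erase v, β k u v = 0) ∧
      ∀ f, ∑ k, dOne (β k) f ^ 2 = 8 * triArea φ f ^ 2 := by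
  let b := stdOrthonormalBasis ℝ E
  let x i := φ i - (n : ℝ)⁻¹ • ∑ j, φ j
  refine ⟨_, fun k u v => wedgeCoord (b k.1) (b k.2) (x u) (x v), fun k u v => ?_,
    fun k v => ?_, fun f => ?_⟩
  · exact wedgeCoord_swap ..
  · rw [sum_erase (f := fun u => wedgeCoord (b k.1) (b k.2) (x u) (x v)) _ (wedgeCoord_self ..),
      sum_wedgeCoord_left, sum_sub_centroid]
    simp [wedgeCoord]
  · rw [sum_sq_dOne_wedgeCoord, triArea_sub_const]

theorem exists_coclosed_cochains_sum_sq_dOne_eq (φ : Fin n → E) :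
    ∃ (m : ℕ) (β : Fin m × Fin m → Fin n → Fin n → ℝ), (∀ k u v, β k u v = -β k v u) ∧
      (∀ k v, ∑ u ∈ univ.erase v, β k u v = 0) ∧
      ∀ f, ∑ k, dOne (β k) f ^ 2 = 8 * triArea φ f ^ 2 := by
  let V := Submodule.span ℝ (Set.range φ)
  have : FiniteDimensional ℝ V := FiniteDimensional.span_of_finite ℝ (Set.finite_range φ)
  let ψ i : V := ⟨φ i, Submodule.subset_span ⟨i, rfl⟩⟩
  obtain ⟨m, β, hanti, hcocl, harea⟩ :=
    exists_coclosed_cochains_sum_sq_dOne_eq_of_finiteDimensional ψ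
  refine ⟨m, β, hanti, hcocl, fun f => ?_⟩
  rw [harea, ← triArea_comp_linearIsometry V.subtypeₗᵢ]
  rfl

end Wedge

theorem IsFilling.nonempty {n : ℕ} {y : Finset (Finset (Fin n))} {τ : Finset (Fin n)}
    (hy : IsFilling y τ) (hτ : 2 ≤ #τ) : y.Nonempty := by
  obtain ⟨e, heτ, he⟩ := exists_subset_card_eq hτ
  have hparity := hy.2 e he
  rw [if_pos heτ] at hparity
  rcases y.eq_empty_or_nonempty with rfl | hne
  · simp at hparity
  · exact hne

theorem mul_sum_sq_triArea_le {n : ℕ} {H : Type*} [NormedAddCommGroup H] [InnerProductSpace ℝ H]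
    (X : Finset (Finset (Fin n))) {c : ℝ} (hc : 0 ≤ c)
    (hspec : ∀ β : Fin n → Fin n → ℝ, (∀ u v, β u v = -β v u) →
      (∀ v : Fin n, ∑ u ∈ univ.erase v, β u v = 0) → c * normSq β ≤ ∑ f ∈ X, dOne β f ^ 2)
    (φ : Fin n → H) :
    c * ∑ τ : Finset (Fin n) with #τ = 3, triArea φ τ ^ 2 ≤
      3 * (n - 2 : ℕ) * ∑ f ∈ X, triArea φ f ^ 2 := by
  obtain ⟨m, β, hanti, hcocl, harea⟩ := exists_coclosed_cochains_sum_sq_dOne_eq φ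
  have sum_sq_dOne_eq (s : Finset (Finset (Fin n))) :
      ∑ k, ∑ f ∈ s, dOne (β k) f ^ 2 = 8 * ∑ f ∈ s, triArea φ f ^ 2 := by
    rw [sum_comm, mul_sum]
    exact sum_congr rfl fun f _ => harea f
  have upper : 8 * ∑ τ : Finset (Fin n) with #τ = 3, triArea φ τ ^ 2 ≤
      3 * (n - 2 : ℕ) * ∑ k, normSq (β k) := by
    rw [← sum_sq_dOne_eq, mul_sum]
    exact sum_le_sum fun k _ => sum_sq_dOne_le (β k)
  have lower : c * ∑ k, normSq (β k) ≤ 8 * ∑ f ∈ X, triArea φ f ^ 2 := by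
    rw [← sum_sq_dOne_eq, mul_sum]
    exact sum_le_sum fun k _ => hspec (β k) (hanti k) (hcocl k)
  have hn2 : (0 : ℝ) ≤ 3 * (n - 2 : ℕ) := by positivity
  nlinarith [mul_le_mul_of_nonneg_left upper hc, mul_le_mul_of_nonneg_left lower hn2]

theorem stmt11_general {n : ℕ} (hn : 3 ≤ n) (ε : ℝ)
    {H : Type*} [NormedAddCommGroup H] [InnerProductSpace ℝ H]
    (X : Finset (Finset (Fin n)))
    (hXcard : (X.card : ℝ) ≤ (n : ℝ) ^ ((2 : ℝ) + ε))
    (hfill : ∀ τ : Finset (Fin n), τ.card = 3 → ∃ y ⊆ X, IsFilling y τ)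
    (hspec : ∀ β : Fin n → Fin n → ℝ, (∀ u v, β u v = - β v u) →
      (∀ v : Fin n, ∑ u ∈ Finset.univ.erase v, β u v = 0) →
      ∑ f ∈ X, dOne β f ^ 2 ≥ ((n : ℝ) ^ ε / 3) * normSq β)
    (φ : Fin n → H)
    (hφ : ∀ τ : Finset (Fin n), τ.card = 3 → (fillIn X τ : ℝ) ≤ triArea φ τ) :
    ∃ f ∈ X,
      (1 / (9 * (n : ℝ) ^ 3)) *
          ∑ τ ∈ Finset.univ.filter (fun τ : Finset (Fin n) => τ.card = 3),
            (fillIn X τ : ℝ) ^ 2 ≤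
        triArea φ f ^ 2 := by
  obtain ⟨τ, -, hτ⟩ := exists_subset_card_eq (s := (univ : Finset (Fin n))) (by simpa using hn)
  obtain ⟨y, hyX, hy⟩ := hfill τ hτ
  obtain ⟨f, hf, hmax⟩ := X.exists_max_image (fun f => triArea φ f ^ 2)
    ((hy.nonempty (by omega)).mono hyX)
  refine ⟨f, hf, ?_⟩
  have hn0 : (0 : ℝ) < n := by positivity
  have hnε : 0 < (n : ℝ) ^ ε := Real.rpow_pos_of_pos hn0 ε
  have comparison := mul_sum_sq_triArea_le X (by positivity) hspec φ
  have max_bound : ∑ g ∈ X, triArea φ g ^ 2 ≤ (n : ℝ) ^ 2 * (n : ℝ) ^ ε * triArea φ f ^ 2 := by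
    calc ∑ g ∈ X, triArea φ g ^ 2 ≤ #X * triArea φ f ^ 2 := by
          simpa using sum_le_card_nsmul X _ _ hmax
      _ ≤ (n : ℝ) ^ 2 * (n : ℝ) ^ ε * triArea φ f ^ 2 := by
          rw [Real.rpow_add hn0, Real.rpow_two] at hXcard
          exact mul_le_mul_of_nonneg_right hXcard (sq_nonneg _)
  have fill_le_area : ∑ τ : Finset (Fin n) with #τ = 3, (fillIn X τ : ℝ) ^ 2 ≤
      ∑ τ : Finset (Fin n) with #τ = 3, triArea φ τ ^ 2 :=
    sum_le_sum fun τ hτ => pow_le_pow_left₀ (Nat.cast_nonneg _) (hφ τ (mem_filter.1 hτ).2) 2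
  have area_bound : ∑ τ : Finset (Fin n) with #τ = 3, triArea φ τ ^ 2 ≤
      9 * (n : ℝ) ^ 3 * triArea φ f ^ 2 := by
    refine le_of_mul_le_mul_left ?_ hnε
    calc (n : ℝ) ^ ε * ∑ τ : Finset (Fin n) with #τ = 3, triArea φ τ ^ 2
        = 3 * ((n : ℝ) ^ ε / 3 * ∑ τ : Finset (Fin n) with #τ = 3, triArea φ τ ^ 2) := by ring
      _ ≤ 3 * (3 * n * ((n : ℝ) ^ 2 * (n : ℝ) ^ ε * triArea φ f ^ 2)) := by
          grw [comparison, (mod_cast Nat.sub_le n 2 : ((n - 2 : ℕ) : ℝ) ≤ n), max_bound]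
      _ = (n : ℝ) ^ ε * (9 * (n : ℝ) ^ 3 * triArea φ f ^ 2) := by ring
  rw [one_div, inv_mul_le_iff₀ (by positivity)]
  exact fill_le_area.trans area_bound

theorem stmt11 {n : ℕ} (hn : 3 ≤ n) (ε : ℝ) (hε : 0 < ε)
    {H : Type*} [NormedAddCommGroup H] [InnerProductSpace ℝ H]
    (X : Finset (Finset (Fin n))) (hX3 : ∀ f ∈ X, f.card = 3)
    (hXcard : (X.card : ℝ) ≤ (n : ℝ) ^ ((2 : ℝ) + ε))
    (hfill : ∀ τ : Finset (Fin n), τ.card = 3 → ∃ y ⊆ X, IsFilling y τ)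
    (hspec : ∀ β : Fin n → Fin n → ℝ, (∀ u v, β u v = - β v u) →
      (∀ v : Fin n, ∑ u ∈ Finset.univ.erase v, β u v = 0) →
      ∑ f ∈ X, dOne β f ^ 2 ≥ ((n : ℝ) ^ ε / 3) * normSq β)
    (φ : Fin n → H)
    (hφ : ∀ τ : Finset (Fin n), τ.card = 3 → (fillIn X τ : ℝ) ≤ triArea φ τ) :
    ∃ f ∈ X,
      (1 / (9 * (n : ℝ) ^ 3)) *
          ∑ τ ∈ Finset.univ.filter (fun τ : Finset (Fin n) => τ.card = 3),
            (fillIn X τ : ℝ) ^ 2 ≤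
        triArea φ f ^ 2 :=
  stmt11_general hn ε X hXcard hfill hspec φ hφ
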